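/- Let u : [0,1] → gl(d,ℝ) and n, ν : [0,1] → ℝ^d be continuous curves such that m_ν(t) := D_ν ℓ(u(t),n(t),ν(t)) is continuously differentiable, and m_u(t) := D_u ℓ(u(t),n(t),ν(t)) and m_n(t) := D_n ℓ(u(t),n(t),ν(t)) are continuous. Suppose that for every C¹ pair of variation curves δu : [0,1] → gl(d,ℝ) and ω : [0,1] → ℝ^d vanishing at t = 0 and t = 1, the first-variation integral ∫₀¹ [ ⟨m_u(t), δu(t)⟩ + ⟨m_n(t), ω(t)⟩ + ⟨m_ν(t), ω'(t) − u(t) ω(t) − δu(t) n(t)⟩ ] dt vanishes. Then for all t ∈ (0,1): m_u(t) + m_ν(t) ⋄ n(t) = 0 and m_ν'(t) + u(t) ⋆ m_ν(t) − m_n(t) = 0 (the Euler–Lagrange system for metamorphosis in the reduced variables). -/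

import Mathlib

open Set

attribute [local instance] Matrix.normedAddCommGroup Matrix.normedSpace

/-- The diamond operator `⋄ : (ℝ^d)* × ℝ^d → gl(d,ℝ)*`, `⟨σ ⋄ v, u⟩ = −⟨σ, u v⟩`. -/
noncomputable def diaM {d : ℕ} (σ : (Fin d → ℝ) →L[ℝ] ℝ) (v : Fin d → ℝ) :
    Matrix (Fin d) (Fin d) ℝ →L[ℝ] ℝ :=
  LinearMap.toContinuousLinearMap
    { toFun := fun A => - σ (A.mulVec v)
      map_add' := fun A B => by simp [Matrix.add_mulVec]; ring
      map_smul' := fun c A => by simp [Matrix.smul_mulVec] }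

/-- The star operator `⋆ : gl(d,ℝ) × (ℝ^d)* → (ℝ^d)*`, `⟨u ⋆ σ, v⟩ = ⟨σ, u v⟩`. -/
noncomputable def starM {d : ℕ} (u : Matrix (Fin d) (Fin d) ℝ)
    (σ : (Fin d → ℝ) →L[ℝ] ℝ) : (Fin d → ℝ) →L[ℝ] ℝ :=
  σ.comp (LinearMap.toContinuousLinearMap u.mulVecLin)

/-- The coadjoint operator on `gl(d,ℝ)*`: `⟨ad*_u μ, ξ⟩ = ⟨μ, [u,ξ]⟩`. -/
noncomputable def coadM {d : ℕ} (u : Matrix (Fin d) (Fin d) ℝ)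
    (μ : Matrix (Fin d) (Fin d) ℝ →L[ℝ] ℝ) : Matrix (Fin d) (Fin d) ℝ →L[ℝ] ℝ :=
  LinearMap.toContinuousLinearMap
    ((μ : Matrix (Fin d) (Fin d) ℝ →ₗ[ℝ] ℝ) ∘ₗ
      (LinearMap.mulLeft ℝ u - LinearMap.mulRight ℝ u))

/-- `D_u ℓ(u,n,ν)`, the partial Fréchet derivative of `ℓ` in its first argument. -/
noncomputable def D1 {d : ℕ} (ℓ : Matrix (Fin d) (Fin d) ℝ × (Fin d → ℝ) × (Fin d → ℝ) → ℝ)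
    (u : Matrix (Fin d) (Fin d) ℝ) (n ν : Fin d → ℝ) : Matrix (Fin d) (Fin d) ℝ →L[ℝ] ℝ :=
  fderiv ℝ (fun u' => ℓ (u', n, ν)) u

/-- `D_n ℓ(u,n,ν)`, the partial Fréchet derivative of `ℓ` in its second argument. -/
noncomputable def D2 {d : ℕ} (ℓ : Matrix (Fin d) (Fin d) ℝ × (Fin d → ℝ) × (Fin d → ℝ) → ℝ)
    (u : Matrix (Fin d) (Fin d) ℝ) (n ν : Fin d → ℝ) : (Fin d → ℝ) →L[ℝ] ℝ :=
  fderiv ℝ (fun n' => ℓ (u, n', ν)) n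

/-- `D_ν ℓ(u,n,ν)`, the partial Fréchet derivative of `ℓ` in its third argument. -/
noncomputable def D3 {d : ℕ} (ℓ : Matrix (Fin d) (Fin d) ℝ × (Fin d → ℝ) × (Fin d → ℝ) → ℝ)
    (u : Matrix (Fin d) (Fin d) ℝ) (n ν : Fin d → ℝ) : (Fin d → ℝ) →L[ℝ] ℝ :=
  fderiv ℝ (fun ν' => ℓ (u, n, ν')) ν


@[simp] lemma diaM_apply {d : ℕ} (σ : (Fin d → ℝ) →L[ℝ] ℝ) (v : Fin d → ℝ)
    (A : Matrix (Fin d) (Fin d) ℝ) : diaM σ v A = - σ (A.mulVec v) := rfl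

@[simp] lemma starM_apply {d : ℕ} (u : Matrix (Fin d) (Fin d) ℝ)
    (σ : (Fin d → ℝ) →L[ℝ] ℝ) (v : Fin d → ℝ) : starM u σ v = σ (u.mulVec v) := rfl

lemma fund_lemma {E : Type*} [NormedAddCommGroup E] [NormedSpace ℝ E]
    (F : ℝ → E →L[ℝ] ℝ)
    (hF : ∀ e : E, ContinuousOn (fun t => F t e) (Icc 0 1))
    (h : ∀ η : ℝ → E, ContDiff ℝ 1 η → η 0 = 0 → η 1 = 0 →
      ∫ t in (0:ℝ)..1, F t (η t) = 0) :
    ∀ t ∈ Ioo (0:ℝ) 1, F t = 0 := by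
  intro t₀ ht₀
  by_contra hne
  obtain ⟨v, hv⟩ : ∃ v, F t₀ v ≠ 0 := by
    by_contra hv; push_neg at hv
    exact hne (ContinuousLinearMap.ext fun x => by simp [hv x])
  -- replace v by e with F t₀ e > 0
  obtain ⟨e, he⟩ : ∃ e, 0 < F t₀ e := by
    rcases hv.lt_or_gt with h1 | h1
    · exact ⟨-v, by simpa using h1⟩
    · exact ⟨v, h1⟩
  set c := F t₀ e with hc
  -- continuity at t₀
  have hmem : Icc (0:ℝ) 1 ∈ nhds t₀ := Icc_mem_nhds ht₀.1 ht₀.2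
  have hcont : ContinuousAt (fun t => F t e) t₀ := (hF e).continuousAt hmem
  have hev : ∀ᶠ t in nhds t₀, c/2 < F t e :=
    continuousAt_const.eventually_lt hcont (by show c/2 < c; linarith)
  obtain ⟨δ, hδpos, hδ⟩ := Metric.eventually_nhds_iff_ball.1 hev
  set r : ℝ := min δ (min t₀ (1 - t₀)) with hr
  have hrpos : 0 < r := lt_min hδpos (lt_min ht₀.1 (by linarith [ht₀.2]))
  have hball : Metric.ball t₀ r ⊆ Icc (0:ℝ) 1 := by
    intro x hx
    rw [Metric.mem_ball, Real.dist_eq, abs_lt] at hx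
    have h1 : r ≤ t₀ := (min_le_right _ _).trans (min_le_left _ _)
    have h2 : r ≤ 1 - t₀ := (min_le_right _ _).trans (min_le_right _ _)
    constructor <;> nlinarith
  set φ : ContDiffBump t₀ := ⟨r/2, r, by linarith, by linarith⟩
  set η : ℝ → E := fun t => φ t • e with hη
  have hηc : ContDiff ℝ 1 η := (φ.contDiff (n := 1)).smul contDiff_const
  have hφ0 : ∀ t, t ∉ Metric.ball t₀ r → φ t = 0 := by
    intro t ht
    have := φ.support_eq
    by_contra h0
    exact ht (this ▸ Function.mem_support.2 h0 : t ∈ Metric.ball t₀ φ.rOut)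
  have hη0 : η 0 = 0 := by
    have : (0:ℝ) ∉ Metric.ball t₀ r := fun hx => by
      rw [Metric.mem_ball, Real.dist_eq, abs_lt] at hx
      have h1 : r ≤ t₀ := (min_le_right _ _).trans (min_le_left _ _)
      linarith [hx.1]
    simp [hη, hφ0 0 this]
  have hη1 : η 1 = 0 := by
    have : (1:ℝ) ∉ Metric.ball t₀ r := fun hx => by
      have := (hball hx).2
      rw [Metric.mem_ball, Real.dist_eq] at hx
      have h2 : r ≤ 1 - t₀ := (min_le_right _ _).trans (min_le_right _ _)
      rw [abs_lt] at hx; linarith [hx.1]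
    simp [hη, hφ0 1 this]
  have hint := h η hηc hη0 hη1
  -- rewrite integrand
  have heq : ∀ t, F t (η t) = φ t * F t e := fun t => by simp [hη]
  set f : ℝ → ℝ := fun t => φ t * F t e with hf
  have hfc : ContinuousOn f (Icc 0 1) := (φ.continuous.continuousOn).mul (hF e)
  have hfnn : ∀ t ∈ Icc (0:ℝ) 1, 0 ≤ f t := by
    intro t ht
    by_cases hb : t ∈ Metric.ball t₀ r
    · have := hδ t (Metric.ball_subset_ball (min_le_left _ _) hb)
      exact mul_nonneg φ.nonneg (by linarith)
    · simp [hf, hφ0 t hb]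
  have : (0:ℝ) < ∫ t in (0:ℝ)..1, f t := by
    have hfi : IntervalIntegrable f MeasureTheory.volume 0 1 :=
      ContinuousOn.intervalIntegrable (by rwa [uIcc_of_le zero_le_one])
    have hsub : ∫ t in (t₀ - r/2)..(t₀ + r/2), f t ≤ ∫ t in (0:ℝ)..1, f t := by
      have h1 : r/2 ≤ t₀ := by
        have : r ≤ t₀ := (min_le_right _ _).trans (min_le_left _ _); linarith
      have h2 : t₀ + r/2 ≤ 1 := by
        have : r ≤ 1 - t₀ := (min_le_right _ _).trans (min_le_right _ _); linarith
      refine intervalIntegral.integral_mono_interval (by linarith) (by linarith) h2 ?_ hfi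
      exact MeasureTheory.ae_restrict_of_forall_mem measurableSet_Ioc
        fun t ht => hfnn t ⟨le_of_lt ht.1, ht.2⟩
    have hpos : (0:ℝ) < ∫ t in (t₀ - r/2)..(t₀ + r/2), f t := by
      apply intervalIntegral.intervalIntegral_pos_of_pos_on
        (hfi.mono_set (by
          rw [uIcc_of_le (by linarith : t₀ - r/2 ≤ t₀ + r/2), uIcc_of_le zero_le_one]
          apply Icc_subset_Icc
          · have : r ≤ t₀ := (min_le_right _ _).trans (min_le_left _ _); linarith
          · have : r ≤ 1 - t₀ := (min_le_right _ _).trans (min_le_right _ _); linarith))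
        ?_ (by linarith)
      intro x hx
      have hx' : x ∈ Metric.closedBall t₀ (r/2) := by
        rw [Metric.mem_closedBall, Real.dist_eq, abs_le]
        constructor <;> [linarith [hx.1]; linarith [hx.2]]
      have h1 : φ x = 1 := φ.one_of_mem_closedBall hx'
      have h2 : c/2 < F x e := hδ x (by
        rw [Metric.mem_ball, Real.dist_eq, abs_lt]
        have hrδ : r ≤ δ := min_le_left _ _
        rw [Metric.mem_closedBall, Real.dist_eq, abs_le] at hx'
        constructor <;> linarith [hx'.1, hx'.2])
      show 0 < φ x * F x e
      rw [h1]; linarith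
    linarith
  rw [show (∫ t in (0:ℝ)..1, F t (η t)) = ∫ t in (0:ℝ)..1, f t from
    intervalIntegral.integral_congr fun t _ => heq t] at hint
  linarith

lemma ibp_lemma {E : Type*} [NormedAddCommGroup E] [NormedSpace ℝ E]
    (m : ℝ → E →L[ℝ] ℝ) (hm : ContDiffOn ℝ 1 m (Icc 0 1))
    (η : ℝ → E) (hη : ContDiff ℝ 1 η) (h0 : η 0 = 0) (h1 : η 1 = 0) :
    ∫ t in (0:ℝ)..1,
      ((derivWithin m (Icc 0 1) t) (η t) + m t (deriv η t)) = 0 := by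
  set ψ : ℝ → ℝ := fun t => m t (η t) with hψ
  have hψc : ContinuousOn ψ (Icc 0 1) :=
    hm.continuousOn.clm_apply (hη.continuous.continuousOn)
  have hderiv : ∀ x ∈ Ioo (0:ℝ) 1, HasDerivWithinAt ψ
      ((derivWithin m (Icc 0 1) x) (η x) + m x (deriv η x)) (Ioi x) x := by
    intro x hx
    have hmem : Icc (0:ℝ) 1 ∈ nhds x := Icc_mem_nhds hx.1 hx.2
    have hdm : DifferentiableAt ℝ m x :=
      ((hm.differentiableOn one_ne_zero) x ⟨hx.1.le, hx.2.le⟩).differentiableAt hmem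
    have hdw : derivWithin m (Icc 0 1) x = deriv m x := derivWithin_of_mem_nhds hmem
    have hdη : HasDerivAt η (deriv η x) x :=
      ((hη.differentiable one_ne_zero) x).hasDerivAt
    have := (hdm.hasDerivAt.clm_apply hdη)
    rw [hdw]
    exact this.hasDerivWithinAt
  have hint : IntervalIntegrable
      (fun t => (derivWithin m (Icc 0 1) t) (η t) + m t (deriv η t))
      MeasureTheory.volume 0 1 := by
    apply ContinuousOn.intervalIntegrable
    rw [uIcc_of_le zero_le_one]
    exact ((hm.continuousOn_derivWithin (uniqueDiffOn_Icc zero_lt_one) le_rfl).clm_apply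
      hη.continuous.continuousOn).add
      (hm.continuousOn.clm_apply (hη.continuous_deriv le_rfl).continuousOn)
  have := intervalIntegral.integral_eq_sub_of_hasDeriv_right_of_le zero_le_one hψc hderiv hint
  rw [this, hψ]
  simp [h0, h1]

/-- If the first-variation integral (with free velocity variation `δu`, free image

variation `ω`, and induced variation `ω' − u ω − (δu) n` of `ν`) vanishes for all
admissible variations, then the Euler–Lagrange system for metamorphosis in the reduced
variables holds on the interior: `D_u ℓ + D_ν ℓ ⋄ n = 0` and
`(D_ν ℓ)' + u ⋆ D_ν ℓ − D_n ℓ = 0`. -/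
theorem euler_lagrange_from_first_variation {d : ℕ}
    (ℓ : Matrix (Fin d) (Fin d) ℝ × (Fin d → ℝ) × (Fin d → ℝ) → ℝ)
    (hℓ : ContDiff ℝ 1 ℓ)
    (u : ℝ → Matrix (Fin d) (Fin d) ℝ) (n ν : ℝ → Fin d → ℝ)
    (hu : ContinuousOn u (Icc 0 1)) (hn : ContinuousOn n (Icc 0 1))
    (hν : ContinuousOn ν (Icc 0 1))
    (hmν : ContDiffOn ℝ 1 (fun t => D3 ℓ (u t) (n t) (ν t)) (Icc 0 1))
    (hmu : ContinuousOn (fun t => D1 ℓ (u t) (n t) (ν t)) (Icc 0 1))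
    (hmn : ContinuousOn (fun t => D2 ℓ (u t) (n t) (ν t)) (Icc 0 1))
    (hvar : ∀ (δu : ℝ → Matrix (Fin d) (Fin d) ℝ) (ω : ℝ → Fin d → ℝ),
      ContDiffOn ℝ 1 δu (Icc 0 1) → ContDiffOn ℝ 1 ω (Icc 0 1) →
      δu 0 = 0 → δu 1 = 0 → ω 0 = 0 → ω 1 = 0 →
      (∫ t in (0:ℝ)..1,
        ((D1 ℓ (u t) (n t) (ν t)) (δu t)
         + (D2 ℓ (u t) (n t) (ν t)) (ω t)
         + (D3 ℓ (u t) (n t) (ν t))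
             (derivWithin ω (Icc 0 1) t - (u t).mulVec (ω t) - (δu t).mulVec (n t)))) = 0) :
    ∀ t ∈ Ioo (0:ℝ) 1,
      (D1 ℓ (u t) (n t) (ν t) + diaM (D3 ℓ (u t) (n t) (ν t)) (n t) = 0)
      ∧ (derivWithin (fun τ => D3 ℓ (u τ) (n τ) (ν τ)) (Icc 0 1) t
          + starM (u t) (D3 ℓ (u t) (n t) (ν t))
          - D2 ℓ (u t) (n t) (ν t) = 0) := by
  
  have hUD : UniqueDiffOn ℝ (Icc (0:ℝ) 1) := uniqueDiffOn_Icc zero_lt_one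
  -- continuity of elementary pieces
  have hmvc : ∀ e : Fin d → ℝ, ContinuousOn (fun τ => (u τ).mulVec e) (Icc 0 1) := by
    intro e
    exact (continuous_id.matrix_mulVec continuous_const).comp_continuousOn hu
  have hemv : ∀ e : Matrix (Fin d) (Fin d) ℝ,
      ContinuousOn (fun τ => e.mulVec (n τ)) (Icc 0 1) := by
    intro e
    exact (continuous_const.matrix_mulVec continuous_id).comp_continuousOn hn
  -- First equation
  have hF1 : ∀ s ∈ Ioo (0:ℝ) 1,
      D1 ℓ (u s) (n s) (ν s) + diaM (D3 ℓ (u s) (n s) (ν s)) (n s) = 0 := by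
    apply fund_lemma (fun τ => D1 ℓ (u τ) (n τ) (ν τ) + diaM (D3 ℓ (u τ) (n τ) (ν τ)) (n τ))
    · intro e
      apply ContinuousOn.congr
        ((hmu.clm_apply (continuousOn_const (c := e))).sub
          ((hmν.continuousOn.clm_apply (hemv e))))
      intro τ hτ
      simp [sub_eq_add_neg]; rfl
    · intro η hηc hη0 hη1
      have hv := hvar η (fun _ => 0) (hηc.contDiffOn) contDiffOn_const hη0 hη1 rfl rfl
      refine Eq.trans (intervalIntegral.integral_congr ?_) hv
      intro τ hτ
      rw [uIcc_of_le zero_le_one] at hτ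
      have hdc : derivWithin (fun _ : ℝ => (0 : Fin d → ℝ)) (Icc 0 1) τ = 0 :=
        congrFun (derivWithin_const _ _) τ
      simp [hdc, sub_eq_add_neg]; rfl
  -- Second equation
  have hF2 : ∀ s ∈ Ioo (0:ℝ) 1,
      D2 ℓ (u s) (n s) (ν s)
        - derivWithin (fun τ => D3 ℓ (u τ) (n τ) (ν τ)) (Icc 0 1) s
        - starM (u s) (D3 ℓ (u s) (n s) (ν s)) = 0 := by
    apply fund_lemma (fun τ => D2 ℓ (u τ) (n τ) (ν τ)
        - derivWithin (fun σ => D3 ℓ (u σ) (n σ) (ν σ)) (Icc 0 1) τ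
        - starM (u τ) (D3 ℓ (u τ) (n τ) (ν τ)))
    · intro e
      apply ContinuousOn.congr
        (((hmn.clm_apply (continuousOn_const (c := e))).sub
          ((hmν.continuousOn_derivWithin hUD le_rfl).clm_apply (continuousOn_const (c := e)))).sub
          (hmν.continuousOn.clm_apply (hmvc e)))
      intro τ hτ
      simp [sub_eq_add_neg]
    · intro η hηc hη0 hη1
      have hv := hvar (fun _ => 0) η contDiffOn_const (hηc.contDiffOn) rfl rfl hη0 hη1
      have hibp := ibp_lemma (fun τ => D3 ℓ (u τ) (n τ) (ν τ)) hmν η hηc hη0 hη1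
      -- rewrite hvar integral in terms of deriv
      have hveq : (∫ t in (0:ℝ)..1,
          (D2 ℓ (u t) (n t) (ν t)) (η t)
            + (D3 ℓ (u t) (n t) (ν t)) (deriv η t)
            - (D3 ℓ (u t) (n t) (ν t)) ((u t).mulVec (η t))) = 0 := by
        refine Eq.trans (intervalIntegral.integral_congr ?_) hv
        intro τ hτ
        rw [uIcc_of_le zero_le_one] at hτ
        have hdη : derivWithin η (Icc 0 1) τ = deriv η τ :=
          ((hηc.differentiable one_ne_zero) τ).derivWithin (hUD τ hτ)
        simp [hdη, map_sub, sub_eq_add_neg]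
        ring
      have hAint : IntervalIntegrable (fun τ =>
          (derivWithin (fun σ => D3 ℓ (u σ) (n σ) (ν σ)) (Icc 0 1) τ) (η τ)
            + (D3 ℓ (u τ) (n τ) (ν τ)) (deriv η τ)) MeasureTheory.volume 0 1 := by
        apply ContinuousOn.intervalIntegrable
        rw [uIcc_of_le zero_le_one]
        exact ((hmν.continuousOn_derivWithin hUD le_rfl).clm_apply
            hηc.continuous.continuousOn).add
          (hmν.continuousOn.clm_apply (hηc.continuous_deriv le_rfl).continuousOn)
      have hgint : IntervalIntegrable (fun τ =>
          (D2 ℓ (u τ) (n τ) (ν τ)) (η τ)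
            + (D3 ℓ (u τ) (n τ) (ν τ)) (deriv η τ)
            - (D3 ℓ (u τ) (n τ) (ν τ)) ((u τ).mulVec (η τ))) MeasureTheory.volume 0 1 := by
        apply ContinuousOn.intervalIntegrable
        rw [uIcc_of_le zero_le_one]
        exact ((hmn.clm_apply hηc.continuous.continuousOn).add
          (hmν.continuousOn.clm_apply (hηc.continuous_deriv le_rfl).continuousOn)).sub
          (hmν.continuousOn.clm_apply
            (by have h := ((continuous_fst.matrix_mulVec continuous_snd :
                Continuous fun p : Matrix (Fin d) (Fin d) ℝ × (Fin d → ℝ) =>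
                  p.1.mulVec p.2).comp_continuousOn
              (hu.prodMk hηc.continuous.continuousOn)); exact h))
      have : (∫ t in (0:ℝ)..1,
          ((D2 ℓ (u t) (n t) (ν t)
            - derivWithin (fun σ => D3 ℓ (u σ) (n σ) (ν σ)) (Icc 0 1) t
            - starM (u t) (D3 ℓ (u t) (n t) (ν t))) (η t))) =
          (∫ t in (0:ℝ)..1,
            ((D2 ℓ (u t) (n t) (ν t)) (η t)
              + (D3 ℓ (u t) (n t) (ν t)) (deriv η t)
              - (D3 ℓ (u t) (n t) (ν t)) ((u t).mulVec (η t))))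
          - (∫ t in (0:ℝ)..1,
            ((derivWithin (fun σ => D3 ℓ (u σ) (n σ) (ν σ)) (Icc 0 1) t) (η t)
              + (D3 ℓ (u t) (n t) (ν t)) (deriv η t))) := by
        rw [← intervalIntegral.integral_sub hgint hAint]
        apply intervalIntegral.integral_congr
        intro τ hτ
        simp [map_sub, sub_eq_add_neg]
        ring
      rw [this, hveq, hibp, sub_zero]
  intro t ht
  refine ⟨hF1 t ht, ?_⟩
  have h2 := hF2 t ht
  have heq : derivWithin (fun τ => D3 ℓ (u τ) (n τ) (ν τ)) (Icc 0 1) t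
      + starM (u t) (D3 ℓ (u t) (n t) (ν t)) - D2 ℓ (u t) (n t) (ν t)
      = -(D2 ℓ (u t) (n t) (ν t)
        - derivWithin (fun τ => D3 ℓ (u τ) (n τ) (ν τ)) (Icc 0 1) t
        - starM (u t) (D3 ℓ (u t) (n t) (ν t))) := by abel
  rw [heq, h2, neg_zero]
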